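/- arXiv:1807.03281 — 2 statements merged into one kernel-verified Lean document; each statement's English description precedes it below -/
import Mathlib

section
/- Let P be a noetherian poset, meaning every nonempty subset of P contains a maximal element. Then the Alexandroff topological space of P is sober: every irreducible closed subset has a unique generic point. -/
/-- The Alexandroff topology on a preorder: opens are the upper sets (cosieves). -/
def alexandroff (P : Type*) [Preorder P] : TopologicalSpace P where
  IsOpen U := IsUpperSet U
  isOpen_univ := isUpperSet_univ
  isOpen_inter _ _ h₁ h₂ := h₁.inter h₂
  isOpen_sUnion _ h := isUpperSet_sUnion h

/-!
In the Alexandroff topology an irreducible set is directed: two points `x`, `y` of it give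
the opens `Ici x`, `Ici y` meeting it, hence a common upper bound inside it. In a directed
lower set a maximal element is the greatest one, so an irreducible closed set is `Iic m`,
the closure of `{m}`, and `m` is unique because `Iic` is injective on a partial order.
-/

open Set Topology

instance alexandroff_isUpperSet (P : Type*) [Preorder P] :
    @Topology.IsUpperSet P (alexandroff P) _ :=
  @Topology.IsUpperSet.mk P (alexandroff P) _ rfl

theorem Topology.IsUpperSet.isPreirreducible_iff_directedOn {α : Type*} [Preorder α]
    [TopologicalSpace α] [Topology.IsUpperSet α] {s : Set α} :
    IsPreirreducible s ↔ DirectedOn (· ≤ ·) s := by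
  constructor
  · intro hs x hx y hy
    obtain ⟨z, hzs, hxz, hyz⟩ := hs (Ici x) (Ici y)
      (isOpen_iff_isUpperSet.2 (isUpperSet_Ici x)) (isOpen_iff_isUpperSet.2 (isUpperSet_Ici y))
      ⟨x, hx, le_rfl⟩ ⟨y, hy, le_rfl⟩
    exact ⟨z, hzs, hxz, hyz⟩
  · rintro hd u v hu hv ⟨x, hxs, hxu⟩ ⟨y, hys, hyv⟩
    obtain ⟨z, hzs, hxz, hyz⟩ := hd x hxs y hys
    exact ⟨z, hzs, isOpen_iff_isUpperSet.1 hu hxz hxu, isOpen_iff_isUpperSet.1 hv hyz hyv⟩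

theorem IsLowerSet.eq_Iic_of_directedOn {α : Type*} [Preorder α] {s : Set α} {m : α}
    (hs : IsLowerSet s) (hd : DirectedOn (· ≤ ·) s) (hm : m ∈ s)
    (hmax : ∀ a ∈ s, m ≤ a → a ≤ m) : s = Iic m :=
  Subset.antisymm (hd.is_top_of_is_max hm hmax) fun _ hx ↦ hs hx hm

/-- If P is a noetherian poset (every nonempty subset has a maximal
element), then the Alexandroff space of P is sober: every irreducible closed set has
a unique generic point. -/
theorem stmt_6 {P : Type*} [PartialOrder P]
    (hNoeth : ∀ S : Set P, S.Nonempty → ∃ m ∈ S, ∀ x ∈ S, m ≤ x → x = m) :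
    ∀ Z : Set P, @IsClosed P (alexandroff P) Z → @IsIrreducible P (alexandroff P) Z →
      ∃! y : P, @closure P (alexandroff P) {y} = Z := by
  let := alexandroff P
  intro Z hZc hZi
  obtain ⟨m, hmZ, hmax⟩ := hNoeth Z hZi.nonempty
  have hZ : Z = Iic m :=
    (IsUpperSet.isClosed_iff_isLower.1 hZc).eq_Iic_of_directedOn
      (IsUpperSet.isPreirreducible_iff_directedOn.1 hZi.isPreirreducible) hmZ
      fun a ha hma ↦ (hmax a ha hma).le
  refine ⟨m, IsUpperSet.closure_singleton.trans hZ.symm, fun y hy ↦ ?_⟩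
  exact Iic_inj.1 (IsUpperSet.closure_singleton.symm.trans (hy.trans hZ))
end

section
/- Let X be a scheme and let x, y be points of the underlying topological space of X such that x is a specialization of y (x lies in the closure of {y}). Then there exist a valuation ring V with fraction field K and a morphism of schemes Spec V → X sending the generic point of Spec V to y and the closed point of Spec V to x. -/
/-!
The specialization `y ⤳ x` gives a local homomorphism `𝒪_{X,x} → κ(y)`. Its image is dominated
by a valuation subring `V` of `κ(y)`, so the map factors through a local homomorphism
`𝒪_{X,x} → V`, and we take `Spec V → Spec 𝒪_{X,x} → X`. Locality sends the closed point to the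
closed point, hence to `x`; the generic point of `Spec V` is the image of the point of
`Spec κ(y)` (as `V ⊆ κ(y)`), and `Spec κ(y) → X` hits `y`.
-/

open AlgebraicGeometry CategoryTheory IsLocalRing

lemma PrimeSpectrum.comap_closedPoint_of_injective {R K : Type*} [CommRing R] [IsDomain R]
    [Field K] {f : R →+* K} (hf : Function.Injective f) :
    PrimeSpectrum.comap f (closedPoint K) = ⟨⊥, Ideal.isPrime_bot⟩ := by
  ext1
  change Ideal.comap f (maximalIdeal K) = ⊥
  rw [maximalIdeal_eq_bot, ← RingHom.ker_eq_comap_bot, (RingHom.injective_iff_ker_eq_bot f).mp hf]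

namespace AlgebraicGeometry.Scheme

variable {X : Scheme.{u}}

lemma SpecMap_comp_fromSpecStalk_closedPoint {x : X} {A : Type u} [CommRing A] [IsLocalRing A]
    (φ : X.presheaf.stalk x ⟶ .of A) [IsLocalHom φ.hom] :
    (Spec.map φ ≫ X.fromSpecStalk x).base (closedPoint A) = x := by
  have : (Spec.map φ).base (closedPoint A) = closedPoint (X.presheaf.stalk x) :=
    comap_closedPoint φ.hom
  -- `erw`: the points of `Spec (.of A)` are those of `PrimeSpectrum A` only up to unfolding.
  erw [Hom.comp_apply, this, fromSpecStalk_closedPoint]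

lemma SpecMap_stalkSpecializes_residue_fromSpecStalk {x y : X} (h : y ⤳ x) :
    Spec.map (X.presheaf.stalkSpecializes h ≫ X.residue y) ≫ X.fromSpecStalk x =
      X.fromSpecResidueField y := by
  rw [Spec.map_comp, Category.assoc, SpecMap_stalkSpecializes_fromSpecStalk]
  rfl

end AlgebraicGeometry.Scheme

/-- If x is a specialization of y in a scheme X, there is a valuation
ring V and a morphism Spec V → X sending the generic point to y and the closed point
to x. -/
theorem stmt_16 (X : Scheme.{u}) (x y : X) (h : x ∈ closure ({y} : Set X)) :
    ∃ (V : Type u) (_ : CommRing V) (_ : IsDomain V) (_ : ValuationRing V)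
      (f : Spec (CommRingCat.of V) ⟶ X),
      f.base (⟨⊥, Ideal.bot_prime⟩ : PrimeSpectrum V) = y ∧
      f.base (IsLocalRing.closedPoint V) = x := by
  have hyx : y ⤳ x := specializes_iff_mem_closure.mpr h
  let g := X.presheaf.stalkSpecializes hyx ≫ X.residue y
  obtain ⟨V, hV, _⟩ := exists_factor_valuationRing g.hom
  let φ : X.presheaf.stalk x ⟶ .of V := CommRingCat.ofHom (g.hom.codRestrict V.toSubring hV)
  let ι : CommRingCat.of V ⟶ X.residueField y := CommRingCat.ofHom V.subtype
  refine ⟨V, inferInstance, inferInstance, inferInstance, Spec.map φ ≫ X.fromSpecStalk x, ?_,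
    Scheme.SpecMap_comp_fromSpecStalk_closedPoint φ⟩
  rw [← PrimeSpectrum.comap_closedPoint_of_injective (f := ι.hom) Subtype.coe_injective]
  erw [← Scheme.Hom.comp_apply (Spec.map ι)]
  rw [← Spec.map_comp_assoc, show φ ≫ ι = g from rfl,
    Scheme.SpecMap_stalkSpecializes_residue_fromSpecStalk]
  exact Scheme.fromSpecResidueField_apply y _
end
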